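/- arXiv:1803.00284 — 3 statements merged into one kernel-verified Lean document; each statement's English description precedes it below -/
import Mathlib

section
/- For every undirected graph G on at least two vertices, the strong subgraph 2-connectivity of the complete biorientation of G equals the vertex connectivity of G, i.e. κ₂(↔G) = κ(G). -/
/-- A digraph on vertex type `V`: a directed graph without parallel arcs,
given by its arc relation. -/
structure Digr (V : Type*) where
  Adj : V → V → Prop

/-- A subdigraph of a digraph `D`: a set of vertices together with a set of
arcs of `D` whose endpoints lie in the vertex set. -/
structure Subdigr {V : Type*} (D : Digr V) where
  verts : Set V
  arcs : Set (V × V)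
  arcs_adj : ∀ a ∈ arcs, D.Adj a.1 a.2
  arcs_verts : ∀ a ∈ arcs, a.1 ∈ verts ∧ a.2 ∈ verts

/-- A subdigraph is strong (strongly connected) if every vertex reaches every
other vertex by a directed walk using its arcs.  A single vertex is strong. -/
def Subdigr.IsStrong {V : Type*} {D : Digr V} (H : Subdigr D) : Prop :=
  ∀ u ∈ H.verts, ∀ v ∈ H.verts,
    Relation.ReflTransGen (fun a b => (a, b) ∈ H.arcs) u v

/-- `HasIDSS D S p` : there are `p` pairwise internally disjoint strong
subgraphs of `D`, each containing `S`. -/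
def HasIDSS {V : Type*} (D : Digr V) (S : Set V) (p : ℕ) : Prop :=
  ∃ f : Fin p → Subdigr D,
    (∀ i, (f i).IsStrong ∧ S ⊆ (f i).verts) ∧
    (∀ i j, i ≠ j → (f i).verts ∩ (f j).verts = S ∧ (f i).arcs ∩ (f j).arcs = ∅)

/-- `κ_S(D)`: the maximum number of pairwise internally disjoint strong
subgraphs of `D` containing `S`. -/
noncomputable def kappaS {V : Type*} (D : Digr V) (S : Set V) : ℕ :=
  sSup {p | HasIDSS D S p}

/-- `κ_k(D)`: the strong subgraph `k`-connectivity of `D`. -/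
noncomputable def kappaK {V : Type*} [Fintype V] (D : Digr V) (k : ℕ) : ℕ :=
  sInf {m | ∃ S : Finset V, S.card = k ∧ kappaS D (↑S : Set V) = m}

/-- The complete biorientation of an undirected graph `G`: each edge `uv` is
replaced by the two arcs `uv` and `vu`. -/
def biorient {V : Type*} (G : SimpleGraph V) : Digr V := ⟨G.Adj⟩

/-- A digraph is strong if every vertex reaches every other vertex. -/
def Digr.IsStrong {V : Type*} (D : Digr V) : Prop :=
  ∀ u v : V, Relation.ReflTransGen D.Adj u v

/-- The vertex connectivity of `G`: the minimum size of a vertex set `T` such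
that `G - T` is disconnected or has at most one vertex. -/
noncomputable def vConn {V : Type*} [Fintype V] (G : SimpleGraph V) : ℕ :=
  sInf {m | ∃ T : Finset V, T.card = m ∧
    (Fintype.card V - T.card ≤ 1 ∨ ¬ (G.induce ((↑T : Set V)ᶜ)).Connected)}

/-! For `S = {u, v}`, every strong subgraph of `↔G` containing `S` contains a `u`–`v` walk, and
internally disjoint ones meet a set separating `u` from `v` in distinct vertices; moreover the
arcs by which they leave `u` end in distinct vertices, so there are at most `|V| - 1` of them.
Hence a minimum vertex cut bounds `κ_S(↔G)` for a suitable pair `S`. Conversely, by Menger's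
theorem there are `κ(G)` internally disjoint `u`–`v` walks (when `u` and `v` are adjacent,
`κ(G) - 1` of them in `G - uv` plus the edge `uv` itself), and the biorientation of each is a
strong subgraph. -/

namespace SimpleGraph

variable {V : Type*} {G H : SimpleGraph V} {A B X : Set V} {a b c z : V}

def ReachableAvoiding (G : SimpleGraph V) (X : Set V) (a b : V) : Prop :=
  ∃ w : G.Walk a b, ∀ z ∈ w.support, z ∉ X

def Separates (G : SimpleGraph V) (A B X : Set V) : Prop :=
  ∀ ⦃a b : V⦄, a ∈ A → b ∈ B → ∀ w : G.Walk a b, ∃ x ∈ X, x ∈ w.support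

structure DisjointWalks (G : SimpleGraph V) (A B : Set V) (k : ℕ) where
  src : Fin k → V
  tgt : Fin k → V
  walk : ∀ i, G.Walk (src i) (tgt i)
  src_mem : ∀ i, src i ∈ A
  tgt_mem : ∀ i, tgt i ∈ B
  disjoint : Pairwise fun i j => (walk i).support.Disjoint (walk j).support

namespace ReachableAvoiding

lemma refl (ha : a ∉ X) : G.ReachableAvoiding X a a := ⟨.nil, by simpa⟩

lemma symm (h : G.ReachableAvoiding X a b) : G.ReachableAvoiding X b a :=
  let ⟨w, hw⟩ := h; ⟨w.reverse, by simpa using hw⟩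

lemma trans (h₁ : G.ReachableAvoiding X a b) (h₂ : G.ReachableAvoiding X b c) :
    G.ReachableAvoiding X a c :=
  let ⟨w₁, hw₁⟩ := h₁; let ⟨w₂, hw₂⟩ := h₂
  ⟨w₁.append w₂, fun z hz => (Walk.mem_support_append_iff _ _).1 hz |>.elim (hw₁ z) (hw₂ z)⟩

lemma cons (hab : G.Adj a b) (ha : a ∉ X) (h : G.ReachableAvoiding X b c) :
    G.ReachableAvoiding X a c :=
  let ⟨w, hw⟩ := h; ⟨.cons hab w, by simpa [ha] using hw⟩

lemma not_mem_right (h : G.ReachableAvoiding X a b) : b ∉ X :=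
  let ⟨w, hw⟩ := h; hw b w.end_mem_support

end ReachableAvoiding

namespace Separates

lemma not_reachableAvoiding (h : G.Separates A B X) (ha : a ∈ A) (hb : b ∈ B) :
    ¬ G.ReachableAvoiding X a b := fun ⟨w, hw⟩ =>
  let ⟨x, hx, hxw⟩ := h ha hb w; hw x hxw hx

lemma ne (h : G.Separates {a} {b} X) (ha : a ∉ X) : a ≠ b := by
  rintro rfl
  obtain ⟨x, hx, hxa⟩ := h rfl rfl .nil
  exact ha (by simpa [(List.mem_singleton.1 hxa)] using hx)

lemma symm (h : G.Separates A B X) : G.Separates B A X := fun b a hb ha w => by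
  simpa using h ha hb w.reverse

lemma mono {Y : Set V} (h : G.Separates A B X) (hXY : X ⊆ Y) : G.Separates A B Y :=
  fun _ _ ha hb w => let ⟨x, hx, hxw⟩ := h ha hb w; ⟨x, hXY hx, hxw⟩

lemma of_le (h : G.Separates A B X) (hHG : H ≤ G) : H.Separates A B X := fun a b ha hb w => by
  simpa using h ha hb (w.mapLe hHG)

lemma eq_of_reachableAvoiding {s t : V} (h : G.Separates A B X) (ha : a ∈ A) (hb : b ∈ B)
    (hs : s ∈ X) (ht : t ∈ X) (has : z ≠ s → G.ReachableAvoiding X a z)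
    (hbt : z ≠ t → G.ReachableAvoiding X b z) : z = s ∧ z = t := by
  have hzX : z ∈ X := by
    by_contra hzX
    exact h.not_reachableAvoiding ha hb
      ((has fun h => hzX (h ▸ hs)).trans (hbt fun h => hzX (h ▸ ht)).symm)
  exact ⟨by_contra fun hne => (has hne).not_mem_right hzX,
    by_contra fun hne => (hbt hne).not_mem_right hzX⟩

end Separates

lemma separates_singleton_iff : G.Separates {a} {b} X ↔ ¬ G.ReachableAvoiding X a b := by
  refine ⟨fun h => h.not_reachableAvoiding rfl rfl, fun h a' b' ha hb w => ?_⟩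
  subst ha hb
  by_contra hw
  push Not at hw
  exact h ⟨w, fun z hz hzX => hw z hzX hz⟩

lemma Walk.exists_prefix_first_mem (X : Set V) (w : G.Walk a b)
    (hw : ∃ x ∈ X, x ∈ w.support) : ∃ s ∈ X, ∃ w' : G.Walk a s, w'.support ⊆ w.support ∧
      ∀ z ∈ w'.support, z ≠ s → G.ReachableAvoiding X a z := by
  induction w with
  | nil =>
    obtain ⟨x, hx, hxa⟩ := hw
    rw [Walk.support_nil, List.mem_singleton] at hxa
    exact ⟨_, hxa ▸ hx, .nil, List.Subset.refl _, by simp⟩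
  | @cons a c _ hac p ih =>
    by_cases ha : a ∈ X
    · exact ⟨a, ha, .nil, by simp, by simp⟩
    obtain ⟨x, hx, hxw⟩ := hw
    have hxp : x ∈ p.support := by
      rw [Walk.support_cons, List.mem_cons] at hxw
      exact hxw.resolve_left fun h => ha (h ▸ hx)
    obtain ⟨s, hs, w', hsub, hreach⟩ := ih ⟨x, hx, hxp⟩
    refine ⟨s, hs, .cons hac w', List.cons_subset_cons _ hsub, fun z hz hzs => ?_⟩
    rw [Walk.support_cons, List.mem_cons] at hz
    rcases hz with rfl | hz
    · exact .refl ha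
    · exact (hreach z hz hzs).cons hac ha

namespace DisjointWalks

variable {k : ℕ}

def reverse (P : G.DisjointWalks A B k) : G.DisjointWalks B A k where
  src := P.tgt
  tgt := P.src
  walk i := (P.walk i).reverse
  src_mem := P.tgt_mem
  tgt_mem := P.src_mem
  disjoint i j hij z hi hj := P.disjoint hij (by simpa using hi) (by simpa using hj)

def mapLe (P : G.DisjointWalks A B k) (hGH : G ≤ H) : H.DisjointWalks A B k where
  src := P.src
  tgt := P.tgt
  walk i := (P.walk i).mapLe hGH
  src_mem := P.src_mem
  tgt_mem := P.tgt_mem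
  disjoint i j hij z hi hj := P.disjoint hij (by simpa using hi) (by simpa using hj)

lemma tgt_injective (P : G.DisjointWalks A B k) : Function.Injective P.tgt := by
  intro i j hij
  by_contra hne
  exact P.disjoint hne (by rw [← hij]; exact (P.walk i).end_mem_support) (P.walk j).end_mem_support

lemma exists_tgt_eq {X : Finset V} (P : G.DisjointWalks A X X.card) {x : V} (hx : x ∈ X) :
    ∃ i, P.tgt i = x := by
  obtain ⟨i, -, hi⟩ := Finset.surj_on_of_inj_on_of_card_le (s := Finset.univ)
    (fun i _ => P.tgt i) (fun i _ => P.tgt_mem i) (fun i j _ _ h => P.tgt_injective h)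
    (by simp) x hx
  exact ⟨i, hi.symm⟩

lemma exists_prefix_first_mem (P : G.DisjointWalks A X k) : ∃ Q : G.DisjointWalks A X k,
    ∀ i, ∀ z ∈ (Q.walk i).support, z ≠ Q.tgt i → G.ReachableAvoiding X (Q.src i) z := by
  choose s hs w hsub hreach using fun i =>
    (P.walk i).exists_prefix_first_mem X ⟨P.tgt i, P.tgt_mem i, (P.walk i).end_mem_support⟩
  exact ⟨⟨P.src, s, w, P.src_mem, hs, fun i j hij z hi hj => P.disjoint hij (hsub i hi)
    (hsub j hj)⟩, hreach⟩

end DisjointWalks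

lemma Separates.glue {X : Finset V} {k : ℕ} (hX : G.Separates A B X) (hk : X.card = k)
    (P : G.DisjointWalks A X k) (Q : G.DisjointWalks X B k) :
    Nonempty (G.DisjointWalks A B k) := by
  subst hk
  obtain ⟨P, hP⟩ := P.exists_prefix_first_mem
  obtain ⟨Q, hQ⟩ := Q.reverse.exists_prefix_first_mem
  choose σ hσ using fun i => Q.exists_tgt_eq (P.tgt_mem i)
  have hσinj : Function.Injective σ := fun i j h =>
    P.tgt_injective (by rw [← hσ i, ← hσ j, h])
  -- a common vertex of an `A`-side and a `B`-side walk is their common endpoint in `X`,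
  -- since otherwise it would lie on an `A`–`B` walk avoiding `X`
  have hcross : ∀ i j z, z ∈ (P.walk i).support → z ∈ (Q.walk (σ j)).support → i = j := by
    intro i j z hi hj
    obtain ⟨hzP, hzQ⟩ := hX.eq_of_reachableAvoiding (P.src_mem i) (Q.src_mem (σ j))
      (P.tgt_mem i) (Q.tgt_mem _) (hP i z hi) (hQ _ z hj)
    exact P.tgt_injective (hzP.symm.trans (hzQ.trans (hσ j)))
  refine ⟨⟨P.src, fun i => Q.src (σ i),
    fun i => (P.walk i).append ((Q.walk (σ i)).reverse.copy (hσ i) rfl), P.src_mem,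
    fun i => Q.src_mem _, fun i j hij z hi hj => ?_⟩⟩
  simp only [Walk.mem_support_append_iff, Walk.support_copy, Walk.support_reverse,
    List.mem_reverse] at hi hj
  rcases hi with hi | hi <;> rcases hj with hj | hj
  · exact P.disjoint hij hi hj
  · exact hij (hcross i j z hi hj)
  · exact hij (hcross j i z hj hi).symm
  · exact Q.disjoint (hσinj.ne hij) hi hj

section Contraction

variable [DecidableEq V] {x y : V}

def mergeVert (x y z : V) : V := if z = y then x else z

lemma mergeVert_of_ne (h : z ≠ y) : mergeVert x y z = z := if_neg h

lemma mergeVert_right : mergeVert x y y = x := if_pos rfl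

lemma eq_or_adj_of_mergeVert_eq (hxy : G.Adj x y) {z z' : V}
    (h : mergeVert x y z = mergeVert x y z') : z = z' ∨ G.Adj z z' := by
  unfold mergeVert at h
  split_ifs at h with h₁ h₂ h₂
  · exact .inl (h₁.trans h₂.symm)
  · exact .inr (h₁ ▸ h ▸ hxy.symm)
  · exact .inr (h₂ ▸ h ▸ hxy)
  · exact .inl h

/-- Contraction of the edge `xy` onto `x` without changing the vertex type: `y` becomes
isolated. -/
def contractEdge (G : SimpleGraph V) (x y : V) : SimpleGraph V :=
  fromRel fun a b => ∃ a' b', G.Adj a' b' ∧ mergeVert x y a' = a ∧ mergeVert x y b' = b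

lemma exists_adj_of_contractEdge_adj (h : (G.contractEdge x y).Adj a b) :
    ∃ a' b', G.Adj a' b' ∧ mergeVert x y a' = a ∧ mergeVert x y b' = b := by
  obtain ⟨-, ⟨a', b', h, ha, hb⟩ | ⟨b', a', h, hb, ha⟩⟩ := h
  exacts [⟨a', b', h, ha, hb⟩, ⟨a', b', h.symm, ha, hb⟩]

lemma Adj.contractEdge (h : G.Adj a b) (hne : mergeVert x y a ≠ mergeVert x y b) :
    (G.contractEdge x y).Adj (mergeVert x y a) (mergeVert x y b) :=
  ⟨hne, .inl ⟨a, b, h, rfl, rfl⟩⟩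

lemma ncard_edgeSet_contractEdge_lt [Finite V] (hxy : G.Adj x y) :
    (G.contractEdge x y).edgeSet.ncard < G.edgeSet.ncard := by
  have hsub : (G.contractEdge x y).edgeSet ⊆
      Sym2.map (mergeVert x y) '' (G.edgeSet \ {s(x, y)}) := by
    intro e he
    induction e using Sym2.ind with
    | _ a b =>
      have hne : a ≠ b := (show (G.contractEdge x y).Adj a b from he).1
      obtain ⟨a', b', hab, rfl, rfl⟩ := exists_adj_of_contractEdge_adj he
      refine ⟨s(a', b'), ⟨hab, fun h => hne ?_⟩, rfl⟩
      rcases Sym2.eq_iff.1 h with ⟨rfl, rfl⟩ | ⟨rfl, rfl⟩ <;>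
        simp [mergeVert_right, mergeVert_of_ne hxy.ne]
  calc (G.contractEdge x y).edgeSet.ncard
      ≤ (G.edgeSet \ {s(x, y)}).ncard := (Set.ncard_le_ncard hsub).trans (Set.ncard_image_le)
    _ < G.edgeSet.ncard := Set.ncard_sdiff_singleton_lt_of_mem hxy

lemma Walk.exists_contractEdge (x y : V) {a b : V} (w : G.Walk a b) :
    ∃ w' : (G.contractEdge x y).Walk (mergeVert x y a) (mergeVert x y b),
      w'.support ⊆ w.support.map (mergeVert x y) := by
  induction w with
  | nil => exact ⟨.nil, by simp⟩
  | @cons a c _ hac p ih =>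
    obtain ⟨w', hw'⟩ := ih
    by_cases hm : mergeVert x y a = mergeVert x y c
    · refine ⟨w'.copy hm.symm rfl, fun z hz => ?_⟩
      rw [Walk.support_copy] at hz
      simpa using Or.inr (hw' hz)
    · refine ⟨.cons (hac.contractEdge hm) w', ?_⟩
      rw [Walk.support_cons, Walk.support_cons, List.map_cons]
      exact List.cons_subset_cons _ hw'

lemma Walk.exists_lift_contractEdge (hxy : G.Adj x y) {a b : V}
    (w : (G.contractEdge x y).Walk a b) {a₀ b₀ : V} (ha : mergeVert x y a₀ = a)
    (hb : mergeVert x y b₀ = b) :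
    ∃ w₀ : G.Walk a₀ b₀, ∀ z ∈ w₀.support, mergeVert x y z ∈ w.support := by
  have hjoin : ∀ {z z'}, mergeVert x y z = mergeVert x y z' →
      ∃ q : G.Walk z z', ∀ t ∈ q.support, mergeVert x y t = mergeVert x y z := by
    intro z z' h
    rcases eq_or_adj_of_mergeVert_eq hxy h with rfl | hzz'
    · exact ⟨.nil, by simp⟩
    · exact ⟨.cons hzz' .nil, by simp [h]⟩
  induction w generalizing a₀ with
  | nil =>
    obtain ⟨q, hq⟩ := hjoin (ha.trans hb.symm)
    exact ⟨q, fun t ht => by simp [hq t ht, ha]⟩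
  | @cons a c _ hac p ih =>
    obtain ⟨a', c', ha'c', rfl, rfl⟩ := exists_adj_of_contractEdge_adj hac
    obtain ⟨q, hq⟩ := hjoin ha
    obtain ⟨w₁, hw₁⟩ := ih rfl hb
    refine ⟨q.append (.cons ha'c' w₁), fun t ht => ?_⟩
    simp only [Walk.mem_support_append_iff, Walk.support_cons, List.mem_cons] at ht ⊢
    rcases ht with ht | rfl | ht
    · exact .inl (hq t ht ▸ ha)
    · exact .inl rfl
    · exact .inr (hw₁ t ht)

lemma Separates.of_contractEdge {S : Set V}
    (h : (G.contractEdge x y).Separates (mergeVert x y '' A) (mergeVert x y '' B) S) :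
    G.Separates A B (mergeVert x y ⁻¹' S) := by
  intro a b ha hb w
  obtain ⟨w', hw'⟩ := w.exists_contractEdge x y
  obtain ⟨s, hs, hsw⟩ := h (Set.mem_image_of_mem _ ha) (Set.mem_image_of_mem _ hb) w'
  obtain ⟨z, hz, rfl⟩ := List.mem_map.1 (hw' hsw)
  exact ⟨z, hs, hz⟩

lemma DisjointWalks.nonempty_of_contractEdge {k : ℕ} (hxy : G.Adj x y)
    (P : (G.contractEdge x y).DisjointWalks (mergeVert x y '' A) (mergeVert x y '' B) k) :
    Nonempty (G.DisjointWalks A B k) := by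
  choose a ha hma using P.src_mem
  choose b hb hmb using P.tgt_mem
  choose w hw using fun i => (P.walk i).exists_lift_contractEdge hxy (hma i) (hmb i)
  exact ⟨⟨a, b, w, ha, hb, fun i j hij z hi hj => P.disjoint hij (hw i z hi) (hw j z hj)⟩⟩

end Contraction

lemma nonempty_disjointWalks_of_edgeSet_eq_empty [Fintype V] {k : ℕ} (hG : G.edgeSet = ∅)
    (h : ∀ S : Finset V, G.Separates A B S → k ≤ S.card) : Nonempty (G.DisjointWalks A B k) := by
  classical
  have hAB : G.Separates A B (A ∩ B).toFinset := by
    rintro a b ha hb (_ | ⟨hab, _⟩)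
    · exact ⟨a, by simp [ha, hb], Walk.start_mem_support _⟩
    · exact absurd (G.mem_edgeSet.2 hab) (hG ▸ Set.notMem_empty _)
  obtain ⟨f⟩ := Function.Embedding.nonempty_of_card_le (α := Fin k) (β := (A ∩ B).toFinset)
    (by rw [Fintype.card_fin, Fintype.card_coe]; exact h _ hAB)
  have hf : ∀ i, (f i : V) ∈ A ∩ B := fun i => by simpa using (f i).2
  exact ⟨⟨fun i => f i, fun i => f i, fun _ => .nil, fun i => (hf i).1, fun i => (hf i).2,
    fun i j hij z hi hj => hij (f.injective (Subtype.ext (by simp_all)))⟩⟩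

lemma exists_separates_of_contractEdge [DecidableEq V] {k : ℕ} {x y : V} (hxy : G.Adj x y)
    (h : ∀ S : Finset V, G.Separates A B S → k ≤ S.card) {S : Finset V}
    (hS : (G.contractEdge x y).Separates (mergeVert x y '' A) (mergeVert x y '' B) S)
    (hSk : S.card < k) :
    ∃ X : Finset V, x ∈ X ∧ y ∈ X ∧ G.Separates A B X ∧ X.card = k := by
  have hsep := hS.of_contractEdge
  have hx : x ∈ S := by
    by_contra hx
    refine (h S (hsep.mono fun z hz => ?_)).not_gt hSk
    by_cases hzy : z = y
    · subst hzy
      exact absurd (mergeVert_right (x := x) ▸ hz) hx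
    · rwa [Set.mem_preimage, mergeVert_of_ne hzy] at hz
  have hX : G.Separates A B ↑(insert y S) := hsep.mono fun z hz => by
    by_cases hzy : z = y
    · simp [hzy]
    · rw [Set.mem_preimage, mergeVert_of_ne hzy] at hz
      simp [hz]
  refine ⟨insert y S, Finset.mem_insert_of_mem hx, Finset.mem_insert_self _ _, hX,
    le_antisymm ?_ (h _ hX)⟩
  exact (Finset.card_insert_le _ _).trans hSk

/-- A walk stopped at its first vertex in `X` cannot use the edge `xy`. -/
lemma Separates.of_deleteEdges {x y : V} (hX : G.Separates A B X) (hx : x ∈ X) (hy : y ∈ X)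
    (hxy : x ≠ y) {T : Set V} (hT : (G.deleteEdges {s(x, y)}).Separates A X T) :
    G.Separates A B T := by
  intro a b ha hb w
  obtain ⟨s, hs, w', hsub, hreach⟩ := w.exists_prefix_first_mem X (hX ha hb w)
  have honly : ∀ z ∈ w'.support, z ∈ X → z = s := fun z hz hzX =>
    by_contra fun hne => (hreach z hz hne).not_mem_right hzX
  have hedges : ∀ e ∈ w'.edges, e ∈ (G.deleteEdges {s(x, y)}).edgeSet := by
    intro e he
    rw [edgeSet_deleteEdges]
    refine ⟨w'.edges_subset_edgeSet he, fun hexy => hxy ?_⟩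
    rw [Set.mem_singleton_iff] at hexy
    subst hexy
    exact (honly x (w'.fst_mem_support_of_mem_edges he) hx).trans
      (honly y (w'.snd_mem_support_of_mem_edges he) hy).symm
  obtain ⟨t, ht, htw⟩ := hT ha hs (w'.transfer _ hedges)
  exact ⟨t, ht, hsub (by simpa using htw)⟩

/-- Diestel's first proof: induction on the number of edges. Either contracting an edge `xy`
keeps all separators large, and disjoint walks lift back, or a small separator of the
contraction yields a minimum separator `X ∋ x, y` of `G`; then `G - xy` has `|X|` disjoint walks
from `A` to `X` and from `X` to `B`, which are glued along `X`. -/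
theorem menger [Fintype V] (G : SimpleGraph V) (A B : Set V) (k : ℕ)
    (h : ∀ S : Finset V, G.Separates A B S → k ≤ S.card) : Nonempty (G.DisjointWalks A B k) := by
  classical
  induction hn : G.edgeSet.ncard using Nat.strong_induction_on generalizing G A B with
  | _ n ih =>
  subst hn
  obtain hE | ⟨e, he⟩ := G.edgeSet.eq_empty_or_nonempty
  · exact nonempty_disjointWalks_of_edgeSet_eq_empty hE h
  induction e using Sym2.ind with | _ x y => ?_
  have hxy : G.Adj x y := he
  by_cases hc : ∀ S : Finset V, (G.contractEdge x y).Separates (mergeVert x y '' A)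
      (mergeVert x y '' B) S → k ≤ S.card
  · obtain ⟨P⟩ := ih _ (ncard_edgeSet_contractEdge_lt hxy) _ _ _ hc rfl
    exact P.nonempty_of_contractEdge hxy
  push Not at hc
  obtain ⟨S, hS, hSk⟩ := hc
  obtain ⟨X, hx, hy, hX, hXk⟩ := exists_separates_of_contractEdge hxy h hS hSk
  have hlt : (G.deleteEdges {s(x, y)}).edgeSet.ncard < G.edgeSet.ncard := by
    rw [edgeSet_deleteEdges]
    exact Set.ncard_sdiff_singleton_lt_of_mem he
  obtain ⟨P⟩ := ih _ hlt _ A X (fun T hT => h T (hX.of_deleteEdges hx hy hxy.ne hT)) rfl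
  obtain ⟨Q⟩ := ih _ hlt _ X B
    (fun T hT => h T (hX.symm.of_deleteEdges hx hy hxy.ne hT.symm).symm) rfl
  obtain ⟨R⟩ := (hX.of_le (deleteEdges_le _)).glue hXk P Q
  exact ⟨R.mapLe (deleteEdges_le _)⟩

lemma Walk.IsPath.exists_tail {u v : V} {p : G.Walk u v} (hp : p.IsPath) (huv : u ≠ v) :
    ∃ a, ∃ q : G.Walk a v, G.Adj u a ∧ q.IsPath ∧ u ∉ q.support ∧ q.support ⊆ p.support := by
  cases p with
  | nil => exact absurd rfl huv
  | cons h q =>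
    rw [Walk.cons_isPath_iff] at hp
    exact ⟨_, q, h, hp.1, hp.2, List.subset_cons_self _ _⟩

lemma Walk.exists_inner [DecidableEq V] {u v : V} (w : G.Walk u v) (huv : u ≠ v)
    (hnadj : ¬ G.Adj u v) : ∃ a b, ∃ p : G.Walk a b, G.Adj u a ∧ G.Adj v b ∧
      p.support ⊆ w.support ∧ u ∉ p.support ∧ v ∉ p.support := by
  obtain ⟨a, q, hua, hq, huq, hqw⟩ := w.bypass_isPath.exists_tail huv
  have hva : v ≠ a := fun h => hnadj (h ▸ hua)
  obtain ⟨b, r, hvb, -, hvr, hrq⟩ := hq.reverse.exists_tail hva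
  have hrq' : r.reverse.support ⊆ q.support := fun z hz => by
    simpa using hrq (by simpa using hz)
  exact ⟨a, b, r.reverse, hua, hvb, fun z hz => w.support_bypass_subset_support (hqw (hrq' hz)),
    fun hu => huq (hrq' hu), by simpa using hvr⟩

lemma separates_sdiff_of_separates_neighborSet [DecidableEq V] {u v : V} (huv : u ≠ v)
    (hnadj : ¬ G.Adj u v) {S : Finset V}
    (hS : ((G.deleteIncidenceSet u).deleteIncidenceSet v).Separates (G.neighborSet u)
      (G.neighborSet v) S) :
    G.Separates {u} {v} ↑(S \ {u, v}) := by
  intro a b ha hb w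
  rw [Set.mem_singleton_iff] at ha hb
  subst a b
  obtain ⟨a, b, p, hua, hvb, hpw, hup, hvp⟩ := w.exists_inner huv hnadj
  have hp : ∀ e ∈ p.edges, e ∈ ((G.deleteIncidenceSet u).deleteIncidenceSet v).edgeSet := by
    intro e he
    induction e using Sym2.ind with
    | _ c d =>
      have hc := p.fst_mem_support_of_mem_edges he
      have hd := p.snd_mem_support_of_mem_edges he
      simp only [mem_edgeSet, deleteIncidenceSet_adj]
      exact ⟨⟨p.adj_of_mem_edges he, ne_of_mem_of_not_mem hc hup,
        ne_of_mem_of_not_mem hd hup⟩, ne_of_mem_of_not_mem hc hvp, ne_of_mem_of_not_mem hd hvp⟩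
  obtain ⟨s, hs, hsp⟩ := hS hua hvb (p.transfer _ hp)
  rw [Walk.support_transfer] at hsp
  exact ⟨s, by simp [Finset.mem_coe.1 hs, ne_of_mem_of_not_mem hsp hup,
    ne_of_mem_of_not_mem hsp hvp], hpw hsp⟩

/-- Apply `menger` between the neighbourhoods of `u` and `v` after deleting all edges at `u`
and `v`. -/
theorem exists_internallyDisjoint_walks [Fintype V] {u v : V} (huv : u ≠ v)
    (hnadj : ¬ G.Adj u v) {k : ℕ}
    (hk : ∀ S : Finset V, u ∉ S → v ∉ S → G.Separates {u} {v} S → k ≤ S.card) :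
    ∃ W : Fin k → G.Walk u v,
      Pairwise fun i j => ∀ z ∈ (W i).support, z ∈ (W j).support → z = u ∨ z = v := by
  classical
  set H := (G.deleteIncidenceSet u).deleteIncidenceSet v
  have hHG : H ≤ G := (deleteIncidenceSet_le _ _).trans (deleteIncidenceSet_le _ _)
  obtain ⟨P⟩ := menger H (G.neighborSet u) (G.neighborSet v) k fun S hS =>
    (hk _ (by simp) (by simp) (separates_sdiff_of_separates_neighborSet huv hnadj hS)).trans
      (Finset.card_le_card Finset.sdiff_subset)
  have hsrc i : G.Adj u (P.src i) := P.src_mem i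
  have htgt i : G.Adj (P.tgt i) v := (P.tgt_mem i).symm
  refine ⟨fun i => .cons (hsrc i) (((P.walk i).mapLe hHG).concat (htgt i)),
    fun i j hij z hi hj => ?_⟩
  simp only [Walk.support_cons, Walk.support_concat, Walk.support_mapLe_eq_support,
    List.mem_cons, List.mem_append, List.not_mem_nil, or_false] at hi hj
  rcases hi with rfl | hi | rfl
  · exact .inl rfl
  · rcases hj with rfl | hj | rfl
    · exact .inl rfl
    · exact (P.disjoint hij hi hj).elim
    · exact .inr rfl
  · exact .inr rfl

lemma Separates.insert_of_deleteEdges {u v : V} {T : Set V}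
    (h : (G.deleteEdges {s(u, v)}).Separates A B T) : G.Separates A B (insert v T) := by
  intro a b ha hb w
  by_cases hv : v ∈ w.support
  · exact ⟨v, Set.mem_insert _ _, hv⟩
  have hw : ∀ e ∈ w.edges, e ∈ (G.deleteEdges {s(u, v)}).edgeSet := by
    intro e he
    rw [edgeSet_deleteEdges]
    refine ⟨w.edges_subset_edgeSet he, fun huv => hv ?_⟩
    rw [Set.mem_singleton_iff] at huv
    exact w.snd_mem_support_of_mem_edges (huv ▸ he)
  obtain ⟨t, ht, htw⟩ := h ha hb (w.transfer _ hw)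
  exact ⟨t, Set.mem_insert_of_mem _ ht, by simpa using htw⟩

section VertexCut

variable [Fintype V]

/-- The sets `T` over which `vConn` minimises. -/
def IsVertexCut (G : SimpleGraph V) (T : Finset V) : Prop :=
  Fintype.card V - T.card ≤ 1 ∨ ¬ (G.induce ((↑T : Set V)ᶜ)).Connected

lemma isVertexCut_iff {T : Finset V} : G.IsVertexCut T ↔
    Fintype.card V - T.card ≤ 1 ∨ ∃ a b, a ∉ T ∧ b ∉ T ∧ G.Separates {a} {b} T := by
  refine ⟨?_, fun h => h.imp_right ?_⟩
  · rintro (h | hT)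
    · exact .inl h
    by_cases hT' : ∀ a, a ∈ T
    · exact .inl (by simp [Finset.eq_univ_of_forall hT'])
    push Not at hT'
    obtain ⟨a₀, ha₀⟩ := hT'
    have hpre : ¬ (G.induce ((↑T : Set V)ᶜ)).Preconnected := fun h =>
      hT ((connected_iff _).2 ⟨h, ⟨⟨a₀, ha₀⟩⟩⟩)
    simp only [Preconnected, not_forall] at hpre
    obtain ⟨⟨a, ha⟩, ⟨b, hb⟩, hab⟩ := hpre
    refine .inr ⟨a, b, ha, hb, ?_⟩
    rintro _ _ rfl rfl w
    by_contra hw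
    push Not at hw
    exact hab ⟨w.induce _ fun z hz hzT => hw z hzT hz⟩
  · rintro ⟨a, b, ha, hb, hab⟩ hconn
    obtain ⟨p⟩ := hconn.preconnected ⟨a, ha⟩ ⟨b, hb⟩
    obtain ⟨t, ht, htp⟩ := hab (a := (Embedding.induce _).toHom ⟨a, ha⟩)
      (b := (Embedding.induce _).toHom ⟨b, hb⟩) rfl rfl (p.map (Embedding.induce _).toHom)
    rw [Walk.support_map, List.mem_map] at htp
    obtain ⟨⟨t', ht'⟩, -, rfl⟩ := htp
    exact ht' ht

/-- Unless `T ∪ {u, v}` is everything, some vertex outside it is cut off by `T` from `u` or from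
`v` in `G - uv`, hence also in `G - v`, resp. `G - u`. -/
lemma isVertexCut_insert_of_separates_deleteEdges [DecidableEq V] {u v : V} {T : Finset V}
    (huv : u ≠ v) (hu : u ∉ T) (hv : v ∉ T) (hT : (G.deleteEdges {s(u, v)}).Separates {u} {v} T) :
    G.IsVertexCut (insert u T) ∨ G.IsVertexCut (insert v T) := by
  by_cases hall : ∀ z, z ∈ T ∨ z = u ∨ z = v
  · have hcard : Fintype.card V ≤ (insert u (insert v T)).card := by
      rw [← Finset.card_univ]
      exact Finset.card_le_card fun z _ => by rcases hall z with h | h | h <;> simp [h]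
    have h₁ := Finset.card_insert_le u (insert v T)
    have h₂ := Finset.card_insert_le v T
    have h₃ := Finset.card_insert_of_notMem hu
    exact .inl (.inl (by omega))
  push Not at hall
  obtain ⟨z, hzT, hzu, hzv⟩ := hall
  have hz : (G.deleteEdges {s(u, v)}).Separates {z} {u} T ∨
      (G.deleteEdges {s(u, v)}).Separates {z} {v} T := by
    simp only [separates_singleton_iff, ← not_and_or]
    rintro ⟨hzu', hzv'⟩
    exact hT.not_reachableAvoiding rfl rfl (hzu'.symm.trans hzv')
  simp only [isVertexCut_iff]
  rcases hz with h | h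
  · refine .inr (.inr ⟨z, u, by simp [hzT, hzv], by simp [hu, huv], ?_⟩)
    simpa using h.insert_of_deleteEdges
  · rw [Sym2.eq_swap] at h
    refine .inl (.inr ⟨z, v, by simp [hzT, hzu], by simp [hv, huv.symm], ?_⟩)
    simpa using h.insert_of_deleteEdges

lemma IsVertexCut.vConn_le {T : Finset V} (hT : G.IsVertexCut T) : vConn G ≤ T.card :=
  Nat.sInf_le ⟨T, rfl, hT⟩

lemma exists_isVertexCut_card_eq_vConn (G : SimpleGraph V) :
    ∃ T : Finset V, G.IsVertexCut T ∧ T.card = vConn G := by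
  obtain ⟨T, hT, h⟩ := Nat.sInf_mem (s := {m | ∃ T : Finset V, T.card = m ∧ G.IsVertexCut T})
    ⟨_, Finset.univ, rfl, .inl (by simp)⟩
  exact ⟨T, h, hT⟩

end VertexCut

end SimpleGraph

open SimpleGraph

section Biorientation

variable {V : Type*} {G : SimpleGraph V} {u v : V}

def SimpleGraph.Walk.toSubdigr (w : G.Walk u v) : Subdigr (biorient G) where
  verts := {z | z ∈ w.support}
  arcs := {a | s(a.1, a.2) ∈ w.edges}
  arcs_adj _ ha := w.adj_of_mem_edges ha
  arcs_verts _ ha := ⟨w.fst_mem_support_of_mem_edges ha, w.snd_mem_support_of_mem_edges ha⟩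

lemma SimpleGraph.Walk.reflTransGen_of_mem_support {R : V → V → Prop} (w : G.Walk u v)
    (hR : ∀ a b, s(a, b) ∈ w.edges → R a b) {z : V} (hz : z ∈ w.support) :
    Relation.ReflTransGen R u z := by
  induction w with
  | nil => exact (List.mem_singleton.1 hz) ▸ .refl
  | cons h p ih =>
    rw [Walk.support_cons, List.mem_cons] at hz
    rcases hz with rfl | hz
    · exact .refl
    · exact .head (hR _ _ (by simp)) (ih (fun a b hab => hR a b (by simp [hab])) hz)

lemma SimpleGraph.Walk.toSubdigr_isStrong (w : G.Walk u v) : w.toSubdigr.IsStrong := by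
  have : Std.Symm fun a b => (a, b) ∈ w.toSubdigr.arcs :=
    ⟨fun a b (h : s(a, b) ∈ w.edges) => show s(b, a) ∈ w.edges by rwa [Sym2.eq_swap]⟩
  have hreach : ∀ z ∈ w.toSubdigr.verts,
      Relation.ReflTransGen (fun a b => (a, b) ∈ w.toSubdigr.arcs) u z :=
    fun z hz => w.reflTransGen_of_mem_support (fun a b h => h) hz
  exact fun z₁ h₁ z₂ h₂ => (Std.Symm.symm _ _ (hreach z₁ h₁)).trans (hreach z₂ h₂)

lemma hasIDSS_zero {D : Digr V} {S : Set V} : HasIDSS D S 0 :=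
  ⟨Fin.elim0, fun i => i.elim0, fun i => i.elim0⟩

lemma hasIDSS_of_walks {ι : Type*} [Fintype ι] (W : ι → G.Walk u v)
    (hsupp : Pairwise fun i j => ∀ z ∈ (W i).support, z ∈ (W j).support → z = u ∨ z = v)
    (hedges : Pairwise fun i j => ∀ e ∈ (W i).edges, e ∉ (W j).edges) :
    HasIDSS (biorient G) {u, v} (Fintype.card ι) := by
  set e := (Fintype.equivFin ι).symm
  refine ⟨fun i => (W (e i)).toSubdigr, fun i => ⟨(W (e i)).toSubdigr_isStrong, ?_⟩,
    fun i j hij => ⟨?_, ?_⟩⟩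
  · rintro z (rfl | rfl)
    exacts [(W _).start_mem_support, (W _).end_mem_support]
  · ext z
    refine ⟨fun hz => hsupp (e.injective.ne hij) z hz.1 hz.2, ?_⟩
    rintro (rfl | rfl)
    exacts [⟨(W _).start_mem_support, (W _).start_mem_support⟩,
      ⟨(W _).end_mem_support, (W _).end_mem_support⟩]
  · exact Set.eq_empty_of_forall_notMem fun a ha => hedges (e.injective.ne hij) _ ha.1 ha.2

lemma SimpleGraph.Walk.edges_disjoint_of_support {W W' : G.Walk u v}
    (hsupp : ∀ z ∈ W.support, z ∈ W'.support → z = u ∨ z = v) (huv : s(u, v) ∉ W.edges) :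
    ∀ e ∈ W.edges, e ∉ W'.edges := by
  intro e he he'
  induction e using Sym2.ind with
  | _ a b =>
    have hab := W.adj_of_mem_edges he
    rcases hsupp a (W.fst_mem_support_of_mem_edges he) (W'.fst_mem_support_of_mem_edges he')
      with rfl | rfl <;>
    rcases hsupp b (W.snd_mem_support_of_mem_edges he) (W'.snd_mem_support_of_mem_edges he')
      with rfl | rfl
    · exact hab.ne rfl
    · exact huv he
    · exact huv (Sym2.eq_swap ▸ he)
    · exact hab.ne rfl

lemma Subdigr.exists_walk {H : Subdigr (biorient G)} (hu : u ∈ H.verts)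
    (h : Relation.ReflTransGen (fun a b => (a, b) ∈ H.arcs) u v) :
    ∃ w : G.Walk u v, ∀ z ∈ w.support, z ∈ H.verts := by
  induction h with
  | refl => exact ⟨.nil, by simpa⟩
  | tail _ hbc ih =>
    obtain ⟨w, hw⟩ := ih
    refine ⟨w.concat (show G.Adj _ _ from H.arcs_adj _ hbc), fun z hz => ?_⟩
    rw [Walk.support_concat, List.mem_append, List.mem_singleton] at hz
    exact hz.elim (hw z) fun h => h ▸ (H.arcs_verts _ hbc).2

lemma HasIDSS.le_card_of_separates {T : Finset V} (hu : u ∉ T) (hv : v ∉ T)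
    (hT : G.Separates {u} {v} T) {p : ℕ} (h : HasIDSS (biorient G) {u, v} p) :
    p ≤ T.card := by
  obtain ⟨f, hf, hdisj⟩ := h
  have hmeet : ∀ i, ∃ t ∈ T, t ∈ (f i).verts := fun i => by
    have hu' := (hf i).2 (Set.mem_insert _ _)
    obtain ⟨w, hw⟩ := Subdigr.exists_walk hu' ((hf i).1 u hu' v ((hf i).2 (by simp)))
    obtain ⟨t, ht, htw⟩ := hT rfl rfl w
    exact ⟨t, ht, hw t htw⟩
  choose t ht htf using hmeet
  have hinj : Function.Injective t := fun i j hij => by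
    by_contra hne
    have : t i ∈ ({u, v} : Set V) := (hdisj i j hne).1 ▸ ⟨htf i, hij ▸ htf j⟩
    rcases this with h | h
    exacts [hu (h ▸ ht i), hv (h ▸ ht i)]
  simpa using Finset.card_le_card_of_injOn t (s := Finset.univ) (fun i _ => ht i) hinj.injOn

lemma HasIDSS.le_card_sub_one [Fintype V] (huv : u ≠ v) {p : ℕ}
    (h : HasIDSS (biorient G) {u, v} p) : p ≤ Fintype.card V - 1 := by
  classical
  obtain ⟨f, hf, hdisj⟩ := h
  -- the subgraphs are arc-disjoint, so the heads of arcs leaving `u` in them are distinct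
  have hout : ∀ i, ∃ c, (u, c) ∈ (f i).arcs := fun i => by
    rcases ((hf i).1 u ((hf i).2 (by simp)) v ((hf i).2 (by simp))).cases_head with h | ⟨c, hc, -⟩
    exacts [absurd h huv, ⟨c, hc⟩]
  choose c hc using hout
  have hcu : ∀ i, c i ≠ u := fun i h => ((f i).arcs_adj _ (hc i)).ne h.symm
  have hinj : Function.Injective c := fun i j hij => by
    by_contra hne
    exact Set.eq_empty_iff_forall_notMem.1 (hdisj i j hne).2 _ ⟨hc i, hij ▸ hc j⟩
  have := Finset.card_le_card_of_injOn c (s := Finset.univ) (t := Finset.univ.erase u)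
    (fun i _ => by simp [hcu i]) hinj.injOn
  simpa [Finset.card_erase_of_mem] using this

lemma le_kappaS {D : Digr V} {S : Set V} {m p : ℕ} (hbdd : ∀ q, HasIDSS D S q → q ≤ m)
    (h : HasIDSS D S p) : p ≤ kappaS D S :=
  le_csSup ⟨m, hbdd⟩ h

lemma kappaS_le {D : Digr V} {S : Set V} {m : ℕ} (h : ∀ p, HasIDSS D S p → p ≤ m) :
    kappaS D S ≤ m :=
  csSup_le ⟨0, hasIDSS_zero⟩ h

lemma hasIDSS_succ_of_adj (hadj : G.Adj u v) {k : ℕ}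
    (W : Fin k → (G.deleteEdges {s(u, v)}).Walk u v)
    (hW : Pairwise fun i j => ∀ z ∈ (W i).support, z ∈ (W j).support → z = u ∨ z = v) :
    HasIDSS (biorient G) {u, v} (k + 1) := by
  have huvW : ∀ i, s(u, v) ∉ (W i).edges := fun i h => by
    simpa using (W i).adj_of_mem_edges h
  let W' : Option (Fin k) → G.Walk u v :=
    fun o => o.elim (.cons hadj .nil) fun i => (W i).mapLe (deleteEdges_le _)
  have hsome : ∀ {i j : Fin k}, some i ≠ some j → i ≠ j := fun h h' => h (congrArg some h')
  refine (by simp : Fintype.card (Option (Fin k)) = k + 1) ▸ hasIDSS_of_walks W' ?_ ?_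
  · rintro (_ | i) (_ | j) hij z hi hj
    · exact absurd rfl hij
    all_goals simp only [W', Option.elim, Walk.support_mapLe_eq_support, Walk.support_cons,
      Walk.support_nil, List.mem_cons, List.not_mem_nil, or_false] at hi hj
    · exact hi
    · exact hj
    · exact hW (hsome hij) z hi hj
  · rintro (_ | i) (_ | j) hij e hi hj
    · exact hij rfl
    all_goals simp only [W', Option.elim, Walk.edges_mapLe_eq_edges, Walk.edges_cons,
      Walk.edges_nil, List.mem_singleton] at hi hj
    · exact huvW j (hi ▸ hj)
    · exact huvW i (hj ▸ hi)
    · exact Walk.edges_disjoint_of_support (hW (hsome hij)) (huvW i) e hi hj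

lemma hasIDSS_of_forall_isVertexCut [Fintype V] (huv : u ≠ v) {k : ℕ}
    (hk : ∀ T, G.IsVertexCut T → k ≤ T.card) : HasIDSS (biorient G) {u, v} k := by
  classical
  by_cases hadj : G.Adj u v
  · obtain _ | k := k
    · exact hasIDSS_zero
    obtain ⟨W, hW⟩ := exists_internallyDisjoint_walks (G := G.deleteEdges {s(u, v)}) huv
      (by simp) (k := k) fun S hu hv hS => by
      rcases isVertexCut_insert_of_separates_deleteEdges huv hu hv hS with h | h <;>
      · have := hk _ h
        rw [Finset.card_insert_of_notMem (by assumption)] at this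
        omega
    exact hasIDSS_succ_of_adj hadj W hW
  · obtain ⟨W, hW⟩ := exists_internallyDisjoint_walks huv hadj fun S hu hv hS =>
      hk S (isVertexCut_iff.2 (.inr ⟨u, v, hu, hv, hS⟩))
    simpa using hasIDSS_of_walks W hW fun i j hij =>
      Walk.edges_disjoint_of_support (hW hij) fun h => hadj ((W i).adj_of_mem_edges h)

end Biorientation

/-- For every undirected graph `G` on at least two vertices, the strong
subgraph 2-connectivity of the complete biorientation of `G` equals the
vertex connectivity of `G`. -/
theorem stmt_0 {V : Type*} [Fintype V] (G : SimpleGraph V)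
    (hV : 2 ≤ Fintype.card V) :
    kappaK (biorient G) 2 = vConn G := by
  classical
  obtain ⟨u₀, v₀, huv₀⟩ := Fintype.exists_pair_of_one_lt_card hV
  have hbdd : ∀ {u v : V}, u ≠ v → ∀ p, HasIDSS (biorient G) {u, v} p → p ≤ Fintype.card V - 1 :=
    fun huv _ h => h.le_card_sub_one huv
  apply le_antisymm
  · obtain ⟨T, hT, hTcard⟩ := exists_isVertexCut_card_eq_vConn G
    obtain ⟨u, v, huv, hle⟩ :
        ∃ u v : V, u ≠ v ∧ ∀ p, HasIDSS (biorient G) {u, v} p → p ≤ T.card := by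
      rcases isVertexCut_iff.1 hT with h | ⟨u, v, hu, hv, huv⟩
      · exact ⟨u₀, v₀, huv₀, fun p hp => by have := hbdd huv₀ p hp; omega⟩
      · exact ⟨u, v, huv.ne hu, fun p hp => hp.le_card_of_separates hu hv huv⟩
    calc kappaK (biorient G) 2 ≤ kappaS (biorient G) ↑({u, v} : Finset V) :=
          Nat.sInf_le ⟨_, Finset.card_pair huv, rfl⟩
      _ ≤ T.card := kappaS_le (by simpa using hle)
      _ = vConn G := hTcard
  · obtain ⟨S, hS, hSk⟩ := Nat.sInf_mem (s := {m | ∃ S : Finset V, S.card = 2 ∧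
      kappaS (biorient G) (↑S : Set V) = m}) ⟨_, {u₀, v₀}, Finset.card_pair huv₀, rfl⟩
    obtain ⟨u, v, huv, rfl⟩ := Finset.card_eq_two.1 hS
    refine le_of_le_of_eq ?_ hSk
    rw [Finset.coe_pair]
    exact le_kappaS (hbdd huv) (hasIDSS_of_forall_isVertexCut huv fun _ hT => hT.vConn_le)
end

section
/- Let D be a digraph with underlying undirected graph G, and let x and y be distinct vertices of D. Then the maximum number of pairwise internally disjoint strong subgraphs of D containing {x,y} is at most the maximum number of internally disjoint paths between x and y in G. -/
/-- The underlying undirected graph of a digraph `D`: forget orientations and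
merge opposite arc pairs into single edges (loops are discarded). -/
def underlying {V : Type*} (D : Digr V) : SimpleGraph V where
  Adj u v := u ≠ v ∧ (D.Adj u v ∨ D.Adj v u)
  symm := by
    constructor
    intro u v h
    exact ⟨fun e => h.1 e.symm, h.2.symm⟩
  loopless := by
    constructor
    intro v h
    exact h.1 rfl

/-- `HasIDPaths G x y p` : there are `p` pairwise distinct, pairwise internally
disjoint `x`–`y` paths in `G` (sharing no vertices other than `x` and `y`). -/
def HasIDPaths {V : Type*} (G : SimpleGraph V) (x y : V) (p : ℕ) : Prop :=
  ∃ f : Fin p → G.Walk x y,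
    (∀ i, (f i).IsPath) ∧
    (∀ i j, i ≠ j → f i ≠ f j ∧
      ∀ v, v ∈ (f i).support → v ∈ (f j).support → v = x ∨ v = y)

/-- The maximum number of pairwise internally disjoint `x`–`y` paths in `G`. -/
noncomputable def maxIDPaths {V : Type*} [Fintype V] (G : SimpleGraph V)
    (x y : V) : ℕ :=
  sSup {p | HasIDPaths G x y p}

/-!
Each of `p` internally disjoint strong subgraphs `D₁, …, D_p` containing `{x, y}` has a
directed `x → y` path `Pᵢ` inside it. Read in the underlying graph, these are `x`–`y` paths whose
common vertices lie in `V(Dᵢ) ∩ V(Dⱼ) = {x, y}`. They are pairwise distinct because, as `x ≠ y`,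
each `Pᵢ` has a first arc, and that arc belongs to `Dᵢ` only.
-/

open Relation

namespace SimpleGraph

lemma exists_walk_darts_of_reflTransGen {V : Type*} {G : SimpleGraph V} {r : V → V → Prop}
    (hr : ∀ a b, a ≠ b → r a b → G.Adj a b) {u v : V} (h : ReflTransGen r u v) :
    ∃ w : G.Walk u v, ∀ d ∈ w.darts, r d.fst d.snd := by
  induction h using ReflTransGen.head_induction_on with
  | refl => exact ⟨.nil, by simp⟩
  | @head a b hab _ ih =>
    obtain ⟨w, hw⟩ := ih
    by_cases hne : a = b
    · subst hne
      exact ⟨w, hw⟩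
    · refine ⟨.cons (hr a b hne hab) w, ?_⟩
      simpa [Walk.darts_cons] using ⟨hab, hw⟩

lemma Walk.support_subset_of_darts {V : Type*} {G : SimpleGraph V} {s : Set V} {u v : V}
    (w : G.Walk u v) (hu : u ∈ s) (hw : ∀ d ∈ w.darts, d.snd ∈ s) : ∀ z ∈ w.support, z ∈ s := by
  intro z hz
  rw [← w.cons_map_snd_darts] at hz
  simp only [List.mem_cons, List.mem_map] at hz
  rcases hz with rfl | ⟨d, hd, rfl⟩
  exacts [hu, hw d hd]

lemma Walk.ne_of_disjoint_darts {V : Type*} {G : SimpleGraph V} {A B : Set (V × V)}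
    (hAB : Disjoint A B) {u v : V} (huv : u ≠ v) (p q : G.Walk u v)
    (hp : ∀ d ∈ p.darts, d.toProd ∈ A) (hq : ∀ d ∈ q.darts, d.toProd ∈ B) : p ≠ q := by
  rintro rfl
  have hlen : p.darts.length ≠ 0 := by
    rw [p.length_darts]
    exact fun h => huv (Walk.eq_of_length_eq_zero h)
  obtain ⟨d, hd⟩ := List.exists_mem_of_length_pos (Nat.pos_of_ne_zero hlen)
  exact hAB.ne_of_mem (hp d hd) (hq d hd) rfl

lemma bddAbove_setOf_hasIDPaths {V : Type*} [Fintype V] (G : SimpleGraph V) (x y : V) :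
    BddAbove {p | HasIDPaths G x y p} := by
  classical
  refine ⟨Fintype.card (G.Path x y), ?_⟩
  rintro p ⟨f, hpath, hdisj⟩
  have hinj : Function.Injective fun i => (⟨f i, hpath i⟩ : G.Path x y) :=
    fun i j hij => by_contra fun hne => (hdisj i j hne).1 (congrArg Subtype.val hij)
  simpa using Fintype.card_le_of_injective _ hinj

end SimpleGraph

namespace Subdigr

variable {V : Type*} {D : Digr V} (H : Subdigr D)

lemma exists_isPath_of_reflTransGen {u v : V}
    (h : ReflTransGen (fun a b => (a, b) ∈ H.arcs) u v) :
    ∃ p : (underlying D).Walk u v, p.IsPath ∧ ∀ d ∈ p.darts, d.toProd ∈ H.arcs := by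
  classical
  obtain ⟨w, hw⟩ := SimpleGraph.exists_walk_darts_of_reflTransGen (G := underlying D)
    (fun a b hab h => ⟨hab, Or.inl (H.arcs_adj (a, b) h)⟩) h
  exact ⟨w.bypass, w.bypass_isPath, fun d hd => hw d (w.darts_bypass_subset_darts hd)⟩

lemma support_subset_verts {u v : V} (p : (underlying D).Walk u v) (hu : u ∈ H.verts)
    (hp : ∀ d ∈ p.darts, d.toProd ∈ H.arcs) : ∀ z ∈ p.support, z ∈ H.verts :=
  p.support_subset_of_darts hu fun d hd => (H.arcs_verts _ (hp d hd)).2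

end Subdigr

lemma hasIDPaths_of_hasIDSS {V : Type*} {D : Digr V} {x y : V} (hxy : x ≠ y) {p : ℕ}
    (h : HasIDSS D {x, y} p) : HasIDPaths (underlying D) x y p := by
  obtain ⟨f, hstrong, hdisj⟩ := h
  have hx i : x ∈ (f i).verts := (hstrong i).2 (by simp)
  have hy i : y ∈ (f i).verts := (hstrong i).2 (by simp)
  choose P hpath harcs using fun i =>
    (f i).exists_isPath_of_reflTransGen ((hstrong i).1 x (hx i) y (hy i))
  refine ⟨P, hpath, fun i j hij => ⟨?_, fun z hzi hzj => ?_⟩⟩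
  · exact (P i).ne_of_disjoint_darts (Set.disjoint_iff_inter_eq_empty.2 (hdisj i j hij).2) hxy
      (P j) (harcs i) (harcs j)
  · have : z ∈ (f i).verts ∩ (f j).verts :=
      ⟨(f i).support_subset_verts _ (hx i) (harcs i) z hzi,
        (f j).support_subset_verts _ (hx j) (harcs j) z hzj⟩
    simpa [(hdisj i j hij).1] using this

/-- The maximum number of pairwise internally disjoint strong subgraphs of a
digraph `D` containing `{x, y}` is at most the maximum number of internally
disjoint `x`–`y` paths in the underlying undirected graph of `D`. -/
theorem stmt_1 {V : Type*} [Fintype V] (D : Digr V) (x y : V) (hxy : x ≠ y) :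
    kappaS D {x, y} ≤ maxIDPaths (underlying D) x y :=
  csSup_le_csSup (SimpleGraph.bddAbove_setOf_hasIDPaths _ x y)
    ⟨0, Fin.elim0, fun i => i.elim0, fun i => i.elim0⟩ fun _ => hasIDPaths_of_hasIDSS hxy
end

section
/- Let D be a digraph with distinct vertices s₁, t₁, s₂, t₂, and let D' be the digraph obtained from D by adding two new vertices x and y together with the arcs t₁x, xs₁, t₂y, ys₂, xs₂, s₂x, yt₁, t₁y. Then D contains two vertex-disjoint directed paths, one from s₁ to t₁ and one from s₂ to t₂, if and only if κ_{{x,y}}(D') ≥ 2, i.e. D' contains two internally disjoint strong subgraphs each containing {x,y}. -/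
/-- The digraph `D'` obtained from `D` by adding two new vertices
`x = Sum.inr false` and `y = Sum.inr true` together with the arcs
`t₁x, xs₁, t₂y, ys₂, xs₂, s₂x, yt₁, t₁y`. -/
def DPrime {V : Type*} (D : Digr V) (s₁ t₁ s₂ t₂ : V) : Digr (V ⊕ Bool) where
  Adj a b :=
    match a, b with
    | Sum.inl u, Sum.inl v => D.Adj u v
    | Sum.inl u, Sum.inr false => u = t₁ ∨ u = s₂
    | Sum.inl u, Sum.inr true => u = t₂ ∨ u = t₁
    | Sum.inr false, Sum.inl v => v = s₁ ∨ v = s₂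
    | Sum.inr true, Sum.inl v => v = s₂ ∨ v = t₁
    | Sum.inr _, Sum.inr _ => False

/-- A directed path from `s` to `t` in `D`, given as a duplicate-free list of
vertices starting at `s`, ending at `t`, with an arc between consecutive
vertices. -/
def IsDiPath {V : Type*} (D : Digr V) (s t : V) (l : List V) : Prop :=
  l ≠ [] ∧ l.head? = some s ∧ l.getLast? = some t ∧ l.Nodup ∧ l.Chain' D.Adj

/-! If `P₁`, `P₂` are the disjoint paths, the subdigraphs of `D'` induced by `V(Pᵢ) ∪ {x, y}`
are strong (through `x`: `x s₁ P₁ t₁ x` and `t₁ y t₁`; `x s₂ P₂ t₂ y s₂ x`), they meet exactly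
in `{x, y}`, and they share no arc because `x` and `y` are not adjacent.

Conversely, the out-neighbours of `x` are `s₁` and `s₂`, so one strong subgraph `H₁` contains
`s₁` and the other, `H₂`, contains `s₂`. The in-neighbours of `x` then force `t₁ ∈ H₁`, and those
of `y` force `t₂ ∈ H₂`. Inside `H₁` the vertices `x, y` can only be entered from `t₁`, and inside
`H₂` every visit to `x` or `y` returns to `s₂` unless it starts at `t₂`; cutting these excursions
out of an `s₁ → t₁` walk in `H₁` and an `s₂ → t₂` walk in `H₂` leaves walks in `D`, which shorten
to paths, disjoint since `H₁` and `H₂` share no vertex of `D`. -/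

open Relation Sum

section

variable {V : Type*}

section Paths

variable {D D₂ : Digr V} {s t : V} {l : List V}

lemma IsDiPath.mono (h : ∀ u v, D.Adj u v → D₂.Adj u v) (hl : IsDiPath D s t l) :
    IsDiPath D₂ s t l :=
  ⟨hl.1, hl.2.1, hl.2.2.1, hl.2.2.2.1, hl.2.2.2.2.imp h⟩

lemma IsDiPath.start_mem (hl : IsDiPath D s t l) : s ∈ l :=
  List.mem_of_mem_head? hl.2.1

lemma IsDiPath.end_mem (hl : IsDiPath D s t l) : t ∈ l :=
  List.mem_of_getLast? hl.2.2.1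

lemma exists_isDiPath_of_reflTransGen (h : ReflTransGen D.Adj s t) : ∃ l, IsDiPath D s t l := by
  induction h using ReflTransGen.head_induction_on with
  | refl => exact ⟨[t], List.cons_ne_nil _ _, rfl, rfl, List.nodup_singleton t, .singleton t⟩
  | @head a c hac _ ih =>
    obtain ⟨l, -, hhead, hlast, hnd, hchain⟩ := ih
    by_cases ha : a ∈ l
    · obtain ⟨p, q, rfl⟩ := List.append_of_mem ha
      exact ⟨a :: q, List.cons_ne_nil _ _, rfl, by simpa [List.getLast?_append] using hlast,
        hnd.sublist (List.sublist_append_right _ _), hchain.infix (List.suffix_append p _).isInfix⟩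
    · obtain ⟨l', rfl⟩ := List.head?_eq_some_iff.1 hhead
      exact ⟨a :: c :: l', List.cons_ne_nil _ _, rfl, by simpa using hlast,
        List.nodup_cons.2 ⟨ha, hnd⟩, hchain.cons_cons hac⟩

lemma IsDiPath.reflTransGen_of_mem (hl : IsDiPath D s t l) {v : V} (hv : v ∈ l) :
    ReflTransGen (fun a b => a ∈ l ∧ b ∈ l ∧ D.Adj a b) s v ∧
      ReflTransGen (fun a b => a ∈ l ∧ b ∈ l ∧ D.Adj a b) v t := by
  obtain ⟨-, hs, ht, -, hc⟩ := hl
  have hc' := List.IsChain.iff_mem.1 hc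
  constructor
  · refine hc'.induction (ReflTransGen _ s) _ (fun _ _ hxy hx => hx.tail hxy) (fun hne => ?_) v hv
    rw [Option.some.inj ((List.head?_eq_some_head hne).symm.trans hs)]
  · refine hc'.backwards_induction (ReflTransGen _ · t) _ (fun _ _ hxy hy => hy.head hxy)
      (fun hne => ?_) v hv
    rw [Option.some.inj ((List.getLast?_eq_some_getLast hne).symm.trans ht)]

end Paths

-- Each excursion into `inr b` starts at `g b` and comes back to `g b`, unless it starts at `t`.
lemma reflTransGen_inl_of_excursions {β : Type*} {r : V ⊕ β → V ⊕ β → Prop} {t : V}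
    (g : β → V) (h_in : ∀ v b, r (inl v) (inr b) → v = t ∨ v = g b)
    (h_out : ∀ b c, r (inr b) c → c = inl (g b)) {a : V ⊕ β} (h : ReflTransGen r a (inl t)) :
    ReflTransGen (fun u v => r (inl u) (inl v)) (Sum.elim id g a) t := by
  induction h using ReflTransGen.head_induction_on with
  | refl => exact .refl
  | @head a c hac _ ih =>
    rcases a with v | b
    · rcases c with w | b
      · exact ih.head hac
      · rcases h_in v b hac with rfl | rfl
        · exact .refl
        · exact ih
    · rwa [h_out b c hac] at ih

namespace Subdigr

variable {D : Digr V}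

abbrev Reach (H : Subdigr D) : V → V → Prop := ReflTransGen fun a b => (a, b) ∈ H.arcs

def induce (D : Digr V) (W : Set V) : Subdigr D where
  verts := W
  arcs := {a | a.1 ∈ W ∧ a.2 ∈ W ∧ D.Adj a.1 a.2}
  arcs_adj _ h := h.2.2
  arcs_verts _ h := ⟨h.1, h.2.1⟩

lemma reach_induce_of_adj {W : Set V} {a b : V} (ha : a ∈ W) (hb : b ∈ W) (hab : D.Adj a b) :
    (induce D W).Reach a b :=
  .single ⟨ha, hb, hab⟩

lemma induce_arcs_inter_eq_empty {W₁ W₂ : Set V}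
    (h : ∀ a ∈ W₁ ∩ W₂, ∀ b ∈ W₁ ∩ W₂, ¬ D.Adj a b) :
    (induce D W₁).arcs ∩ (induce D W₂).arcs = ∅ :=
  Set.eq_empty_of_forall_notMem fun _ ⟨h₁, h₂⟩ => h _ ⟨h₁.1, h₂.1⟩ _ ⟨h₁.2.1, h₂.2.1⟩ h₁.2.2

lemma isStrong_of_hub (H : Subdigr D) (x : V) (h : ∀ v ∈ H.verts, H.Reach x v ∧ H.Reach v x) :
    H.IsStrong :=
  fun _ hu _ hv => (h _ hu).2.trans (h _ hv).1

variable {H : Subdigr D} {u v : V}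

lemma IsStrong.exists_arc_out (hH : H.IsStrong) (hu : u ∈ H.verts) (hv : v ∈ H.verts)
    (huv : u ≠ v) : ∃ w, (u, w) ∈ H.arcs := by
  rcases (hH u hu v hv).cases_head with rfl | ⟨w, hw, -⟩
  · exact absurd rfl huv
  · exact ⟨w, hw⟩

lemma IsStrong.exists_arc_in (hH : H.IsStrong) (hu : u ∈ H.verts) (hv : v ∈ H.verts)
    (huv : u ≠ v) : ∃ w, (w, v) ∈ H.arcs := by
  rcases (hH u hu v hv).cases_tail with rfl | ⟨w, -, hw⟩
  · exact absurd rfl huv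
  · exact ⟨w, hw⟩

lemma exists_isDiPath_inl {β : Type*} {D : Digr V} {D' : Digr (V ⊕ β)}
    (hD : ∀ u v, D'.Adj (inl u) (inl v) → D.Adj u v) (H : Subdigr D') {s t : V}
    (hs : inl s ∈ H.verts) (h : ReflTransGen (fun u v => (inl u, inl v) ∈ H.arcs) s t) :
    ∃ l, IsDiPath D s t l ∧ ∀ v ∈ l, inl v ∈ H.verts := by
  obtain ⟨l, hl⟩ := exists_isDiPath_of_reflTransGen (D := ⟨fun u v => (inl u, inl v) ∈ H.arcs⟩) h
  refine ⟨l, hl.mono fun u v huv => hD u v (H.arcs_adj _ huv), ?_⟩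
  refine hl.2.2.2.2.induction (fun v => inl v ∈ H.verts) _ (fun _ _ hxy _ => (H.arcs_verts _ hxy).2)
    (fun hne => ?_)
  rwa [Option.some.inj ((List.head?_eq_some_head hne).symm.trans hl.2.1)]

end Subdigr

section DPrime

variable {D : Digr V} {s₁ t₁ s₂ t₂ : V}

lemma dPrime_adj_inr_false_left {w : V ⊕ Bool} :
    (DPrime D s₁ t₁ s₂ t₂).Adj (inr false) w ↔ w = inl s₁ ∨ w = inl s₂ := by
  rcases w with v | b <;> simp [DPrime]

lemma dPrime_adj_inr_false_right {w : V ⊕ Bool} :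
    (DPrime D s₁ t₁ s₂ t₂).Adj w (inr false) ↔ w = inl t₁ ∨ w = inl s₂ := by
  rcases w with v | b <;> simp [DPrime]

lemma dPrime_adj_inr_true_left {w : V ⊕ Bool} :
    (DPrime D s₁ t₁ s₂ t₂).Adj (inr true) w ↔ w = inl s₂ ∨ w = inl t₁ := by
  rcases w with v | b <;> simp [DPrime]

lemma dPrime_adj_inr_true_right {w : V ⊕ Bool} :
    (DPrime D s₁ t₁ s₂ t₂).Adj w (inr true) ↔ w = inl t₂ ∨ w = inl t₁ := by
  rcases w with v | b <;> simp [DPrime]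

lemma not_dPrime_adj_inr_inr (b c : Bool) : ¬ (DPrime D s₁ t₁ s₂ t₂).Adj (inr b) (inr c) := by
  cases b <;> cases c <;> simp [DPrime]

def pathVerts (l : List V) : Set (V ⊕ Bool) := {inr false, inr true} ∪ inl '' {v | v ∈ l}

lemma pathVerts_inter_pathVerts {l₁ l₂ : List V} (h : l₁.Disjoint l₂) :
    pathVerts l₁ ∩ pathVerts l₂ = {inr false, inr true} := by
  rw [pathVerts, pathVerts, ← Set.union_inter_distrib_left, ← Set.image_inter inl_injective]
  have hempty : {v | v ∈ l₁} ∩ {v | v ∈ l₂} = ∅ :=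
    Set.eq_empty_of_forall_notMem fun _ hv => h hv.1 hv.2
  rw [hempty, Set.image_empty, Set.union_empty]

lemma inr_mem_pathVerts (l : List V) (b : Bool) : inr b ∈ pathVerts l := by
  cases b <;> simp [pathVerts]

lemma inl_mem_pathVerts {l : List V} {v : V} : inl v ∈ pathVerts l ↔ v ∈ l := by
  simp [pathVerts]

variable {s t : V} {l : List V}

lemma IsDiPath.reach_induce_pathVerts (hl : IsDiPath D s t l) {v : V} (hv : v ∈ l) :
    (Subdigr.induce (DPrime D s₁ t₁ s₂ t₂) (pathVerts l)).Reach (inl s) (inl v) ∧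
      (Subdigr.induce (DPrime D s₁ t₁ s₂ t₂) (pathVerts l)).Reach (inl v) (inl t) := by
  have lift : ∀ {a b}, ReflTransGen (fun a b => a ∈ l ∧ b ∈ l ∧ D.Adj a b) a b →
      (Subdigr.induce (DPrime D s₁ t₁ s₂ t₂) (pathVerts l)).Reach (inl a) (inl b) :=
    fun h => h.lift inl fun a b ⟨ha, hb, hab⟩ => ⟨Or.inr ⟨a, ha, rfl⟩, Or.inr ⟨b, hb, rfl⟩, hab⟩
  exact (hl.reflTransGen_of_mem hv).imp lift lift

lemma isStrong_induce_pathVerts (hl : IsDiPath D s t l)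
    (hxs : (Subdigr.induce (DPrime D s₁ t₁ s₂ t₂) (pathVerts l)).Reach (inr false) (inl s))
    (htx : (Subdigr.induce (DPrime D s₁ t₁ s₂ t₂) (pathVerts l)).Reach (inl t) (inr false))
    (hty : (Subdigr.induce (DPrime D s₁ t₁ s₂ t₂) (pathVerts l)).Reach (inl t) (inr true))
    (hyx : (Subdigr.induce (DPrime D s₁ t₁ s₂ t₂) (pathVerts l)).Reach (inr true) (inr false)) :
    (Subdigr.induce (DPrime D s₁ t₁ s₂ t₂) (pathVerts l)).IsStrong := by
  refine Subdigr.isStrong_of_hub _ (inr false) fun w hw => ?_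
  rcases hw with (rfl | rfl) | ⟨v, hv, rfl⟩
  · exact ⟨.refl, .refl⟩
  · exact ⟨hxs.trans ((hl.reach_induce_pathVerts hl.end_mem).1.trans hty), hyx⟩
  · exact ⟨hxs.trans (hl.reach_induce_pathVerts hv).1, (hl.reach_induce_pathVerts hv).2.trans htx⟩

lemma isStrong_induce_pathVerts_of_isDiPath₁ (hl : IsDiPath D s₁ t₁ l) :
    (Subdigr.induce (DPrime D s₁ t₁ s₂ t₂) (pathVerts l)).IsStrong := by
  have hx := inr_mem_pathVerts l false
  have hy := inr_mem_pathVerts l true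
  have hs := inl_mem_pathVerts.2 hl.start_mem
  have ht := inl_mem_pathVerts.2 hl.end_mem
  have htx := Subdigr.reach_induce_of_adj ht hx (D := DPrime D s₁ t₁ s₂ t₂) (Or.inl rfl)
  exact isStrong_induce_pathVerts hl (Subdigr.reach_induce_of_adj hx hs (Or.inl rfl)) htx
    (Subdigr.reach_induce_of_adj ht hy (Or.inr rfl))
    ((Subdigr.reach_induce_of_adj hy ht (Or.inr rfl)).trans htx)

lemma isStrong_induce_pathVerts_of_isDiPath₂ (hl : IsDiPath D s₂ t₂ l) :
    (Subdigr.induce (DPrime D s₁ t₁ s₂ t₂) (pathVerts l)).IsStrong := by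
  have hx := inr_mem_pathVerts l false
  have hy := inr_mem_pathVerts l true
  have hs := inl_mem_pathVerts.2 hl.start_mem
  have ht := inl_mem_pathVerts.2 hl.end_mem
  have hyx := (Subdigr.reach_induce_of_adj hy hs (D := DPrime D s₁ t₁ s₂ t₂) (Or.inl rfl)).trans
    (Subdigr.reach_induce_of_adj hs hx (Or.inr rfl))
  have hty := Subdigr.reach_induce_of_adj ht hy (D := DPrime D s₁ t₁ s₂ t₂) (Or.inl rfl)
  exact isStrong_induce_pathVerts hl (Subdigr.reach_induce_of_adj hx hs (Or.inr rfl))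
    (hty.trans hyx) hty hyx

end DPrime

section Backward

variable {D : Digr V} {s₁ t₁ s₂ t₂ : V} {H : Subdigr (DPrime D s₁ t₁ s₂ t₂)}

lemma exists_isDiPath₁_of_isStrong (hH : H.IsStrong) (hs₁ : inl s₁ ∈ H.verts)
    (ht₁ : inl t₁ ∈ H.verts) (hs₂ : inl s₂ ∉ H.verts) (ht₂ : inl t₂ ∉ H.verts) :
    ∃ l, IsDiPath D s₁ t₁ l ∧ ∀ v ∈ l, inl v ∈ H.verts := by
  refine H.exists_isDiPath_inl (fun _ _ h => h) hs₁
    (reflTransGen_inl_of_excursions (fun b => if b then t₁ else s₁) ?_ ?_ (hH _ hs₁ _ ht₁))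
  · intro v b hvb
    have hv := (H.arcs_verts _ hvb).1
    cases b <;> rcases H.arcs_adj _ hvb with rfl | rfl <;> simp_all
  · intro b c hbc
    have hc := (H.arcs_verts _ hbc).2
    have hadj := H.arcs_adj _ hbc
    cases b
    · rcases dPrime_adj_inr_false_left.1 hadj with rfl | rfl <;> simp_all
    · rcases dPrime_adj_inr_true_left.1 hadj with rfl | rfl <;> simp_all

lemma exists_isDiPath₂_of_isStrong (hH : H.IsStrong) (hs₂ : inl s₂ ∈ H.verts)
    (ht₂ : inl t₂ ∈ H.verts) (hs₁ : inl s₁ ∉ H.verts) (ht₁ : inl t₁ ∉ H.verts) :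
    ∃ l, IsDiPath D s₂ t₂ l ∧ ∀ v ∈ l, inl v ∈ H.verts := by
  refine H.exists_isDiPath_inl (fun _ _ h => h) hs₂
    (reflTransGen_inl_of_excursions (fun _ => s₂) ?_ ?_ (hH _ hs₂ _ ht₂))
  · intro v b hvb
    have hv := (H.arcs_verts _ hvb).1
    cases b <;> rcases H.arcs_adj _ hvb with rfl | rfl <;> simp_all
  · intro b c hbc
    have hc := (H.arcs_verts _ hbc).2
    have hadj := H.arcs_adj _ hbc
    cases b
    · rcases dPrime_adj_inr_false_left.1 hadj with rfl | rfl <;> simp_all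
    · rcases dPrime_adj_inr_true_left.1 hadj with rfl | rfl <;> simp_all

lemma inl_notMem_of_inter_eq {A B : Set (V ⊕ Bool)} (h : A ∩ B = {inr false, inr true}) {v : V}
    (hA : inl v ∈ A) : inl v ∉ B := fun hB => by
  have hv : inl v ∈ A ∩ B := ⟨hA, hB⟩
  simp [h] at hv

variable {H₁ H₂ : Subdigr (DPrime D s₁ t₁ s₂ t₂)}

lemma exists_disjoint_paths_of_isStrong_of_mem (h₁ : H₁.IsStrong) (h₂ : H₂.IsStrong)
    (hS₁ : {inr false, inr true} ⊆ H₁.verts) (hS₂ : {inr false, inr true} ⊆ H₂.verts)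
    (hV : H₁.verts ∩ H₂.verts = {inr false, inr true})
    (hs₁ : inl s₁ ∈ H₁.verts) (hs₂ : inl s₂ ∈ H₂.verts) :
    ∃ l₁ l₂ : List V, IsDiPath D s₁ t₁ l₁ ∧ IsDiPath D s₂ t₂ l₂ ∧ l₁.Disjoint l₂ := by
  have hV' : H₂.verts ∩ H₁.verts = {inr false, inr true} := Set.inter_comm .. ▸ hV
  have ht₁ : inl t₁ ∈ H₁.verts := by
    obtain ⟨w, hw⟩ := h₁.exists_arc_in (hS₁ (.inr rfl)) (hS₁ (.inl rfl)) (by simp)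
    rcases dPrime_adj_inr_false_right.1 (H₁.arcs_adj _ hw) with rfl | rfl
    · exact (H₁.arcs_verts _ hw).1
    · exact absurd hs₂ (inl_notMem_of_inter_eq hV (H₁.arcs_verts _ hw).1)
  have ht₂ : inl t₂ ∈ H₂.verts := by
    obtain ⟨w, hw⟩ := h₂.exists_arc_in (hS₂ (.inl rfl)) (hS₂ (.inr rfl)) (by simp)
    rcases dPrime_adj_inr_true_right.1 (H₂.arcs_adj _ hw) with rfl | rfl
    · exact (H₂.arcs_verts _ hw).1
    · exact absurd ht₁ (inl_notMem_of_inter_eq hV' (H₂.arcs_verts _ hw).1)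
  obtain ⟨l₁, hp₁, hl₁⟩ := exists_isDiPath₁_of_isStrong h₁ hs₁ ht₁
    (inl_notMem_of_inter_eq hV' hs₂) (inl_notMem_of_inter_eq hV' ht₂)
  obtain ⟨l₂, hp₂, hl₂⟩ := exists_isDiPath₂_of_isStrong h₂ hs₂ ht₂
    (inl_notMem_of_inter_eq hV hs₁) (inl_notMem_of_inter_eq hV ht₁)
  exact ⟨l₁, l₂, hp₁, hp₂, fun v hv₁ hv₂ => inl_notMem_of_inter_eq hV (hl₁ v hv₁) (hl₂ v hv₂)⟩

lemma exists_disjoint_paths_of_isStrong (h₁ : H₁.IsStrong) (h₂ : H₂.IsStrong)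
    (hS₁ : {inr false, inr true} ⊆ H₁.verts) (hS₂ : {inr false, inr true} ⊆ H₂.verts)
    (hV : H₁.verts ∩ H₂.verts = {inr false, inr true}) :
    ∃ l₁ l₂ : List V, IsDiPath D s₁ t₁ l₁ ∧ IsDiPath D s₂ t₂ l₂ ∧ l₁.Disjoint l₂ := by
  obtain ⟨w₁, hw₁⟩ := h₁.exists_arc_out (hS₁ (.inl rfl)) (hS₁ (.inr rfl)) (by simp)
  obtain ⟨w₂, hw₂⟩ := h₂.exists_arc_out (hS₂ (.inl rfl)) (hS₂ (.inr rfl)) (by simp)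
  have hw₁' := (H₁.arcs_verts _ hw₁).2
  have hw₂' := (H₂.arcs_verts _ hw₂).2
  rcases dPrime_adj_inr_false_left.1 (H₁.arcs_adj _ hw₁) with rfl | rfl <;>
    rcases dPrime_adj_inr_false_left.1 (H₂.arcs_adj _ hw₂) with rfl | rfl
  · exact absurd hw₂' (inl_notMem_of_inter_eq hV hw₁')
  · exact exists_disjoint_paths_of_isStrong_of_mem h₁ h₂ hS₁ hS₂ hV hw₁' hw₂'
  · exact exists_disjoint_paths_of_isStrong_of_mem h₂ h₁ hS₂ hS₁ (Set.inter_comm .. ▸ hV) hw₂' hw₁'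
  · exact absurd hw₂' (inl_notMem_of_inter_eq hV hw₁')

end Backward

end

theorem stmt_12_general {V : Type*} (D : Digr V) (s₁ t₁ s₂ t₂ : V) :
    (∃ l₁ l₂ : List V, IsDiPath D s₁ t₁ l₁ ∧ IsDiPath D s₂ t₂ l₂ ∧
      l₁.Disjoint l₂) ↔
    (∃ H₁ H₂ : Subdigr (DPrime D s₁ t₁ s₂ t₂), H₁.IsStrong ∧ H₂.IsStrong ∧
      ({Sum.inr false, Sum.inr true} : Set (V ⊕ Bool)) ⊆ H₁.verts ∧
      ({Sum.inr false, Sum.inr true} : Set (V ⊕ Bool)) ⊆ H₂.verts ∧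
      H₁.verts ∩ H₂.verts = {Sum.inr false, Sum.inr true} ∧
      H₁.arcs ∩ H₂.arcs = ∅) := by
  constructor
  · rintro ⟨l₁, l₂, hp₁, hp₂, hdisj⟩
    refine ⟨_, _, isStrong_induce_pathVerts_of_isDiPath₁ hp₁,
      isStrong_induce_pathVerts_of_isDiPath₂ hp₂, Set.subset_union_left, Set.subset_union_left, pathVerts_inter_pathVerts hdisj,
      Subdigr.induce_arcs_inter_eq_empty ?_⟩
    rw [pathVerts_inter_pathVerts hdisj]
    rintro _ (rfl | rfl) _ (rfl | rfl) <;> exact not_dPrime_adj_inr_inr _ _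
  · rintro ⟨H₁, H₂, h₁, h₂, hS₁, hS₂, hV, -⟩
    exact exists_disjoint_paths_of_isStrong h₁ h₂ hS₁ hS₂ hV

/-- With `x = Sum.inr false` and `y = Sum.inr true`, the digraph `D` contains
two vertex-disjoint directed paths, one from `s₁` to `t₁` and one from `s₂` to
`t₂`, if and only if `D'` contains two internally disjoint strong subgraphs
each containing `{x, y}`. -/
theorem stmt_12 {V : Type*} (D : Digr V) (s₁ t₁ s₂ t₂ : V)
    (hdist : [s₁, t₁, s₂, t₂].Nodup) :
    (∃ l₁ l₂ : List V, IsDiPath D s₁ t₁ l₁ ∧ IsDiPath D s₂ t₂ l₂ ∧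
      l₁.Disjoint l₂) ↔
    (∃ H₁ H₂ : Subdigr (DPrime D s₁ t₁ s₂ t₂), H₁.IsStrong ∧ H₂.IsStrong ∧
      ({Sum.inr false, Sum.inr true} : Set (V ⊕ Bool)) ⊆ H₁.verts ∧
      ({Sum.inr false, Sum.inr true} : Set (V ⊕ Bool)) ⊆ H₂.verts ∧
      H₁.verts ∩ H₂.verts = {Sum.inr false, Sum.inr true} ∧
      H₁.arcs ∩ H₂.arcs = ∅) :=
  stmt_12_general D s₁ t₁ s₂ t₂
end
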